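/- Let s₁, s₂ ∈ ℤ with s₂ ≥ s₁, and let L₁, L₂ be the two rows of the symbol of a bipartition (λ¹, λ²) with respect to (s₁,s₂). Apply the matching procedure: x₁ = min L₁; y₁ = max{z ∈ L₂ : z ≤ x₁} if such z exists, else y₁ = max L₂; repeat on L₁ ∖ {x₁}, L₂ ∖ {y₁}. Then the resulting multiset Ỹ = {y₁, y₂, …} ⊆ L₂ consists of pairwise distinct integers, and the reordered sequences L̃₁ (from Ỹ) and L̃₂ (from (L₂ ∖ Ỹ) ∪ L₁) are strictly increasing sequences of integers with smallest entries s₂ − d and s₂ − d respectively for appropriate d, i.e. they form a valid symbol of some bipartition with charge (s₁,s₂). -/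

import Mathlib

/-- The row of the symbol of a partition `p` (0-indexed, `p i = λ_{i+1}`) with leftmost
entry based at `base` and of length `L`: entries `base + k + λ_{L−k}` for `k = 0,…,L−1`. -/
def symbolRow (p : ℕ → ℕ) (base : ℤ) (L : ℕ) : Finset ℤ :=
  (Finset.range L).image (fun k : ℕ => base + (k : ℤ) + ((p (L - 1 - k) : ℕ) : ℤ))

/-- The matching procedure: `x₁ = min X` is matched to `y₁ = max {z ∈ Y : z ≤ x₁}` if such
`z` exists, else `y₁ = max Y`; then repeat on `X ∖ {x₁}`, `Y ∖ {y₁}`. -/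
def matchSet (X Y : Finset ℤ) : Finset ℤ :=
  if hX : X.Nonempty then
    if hY : Y.Nonempty then
      let x := X.min' hX
      let y := if h : (Y.filter (fun z => z ≤ x)).Nonempty
        then (Y.filter (fun z => z ≤ x)).max' h
        else Y.max' hY
      insert y (matchSet (X.erase x) (Y.erase y))
    else ∅
  else ∅
termination_by X.card
decreasing_by exact Finset.card_erase_lt_of_mem (X.min'_mem hX)

/-!
When `x = min L₁` also lies in `L₂`, the largest element of `L₂` not exceeding `x` is `x` itself,
so the matching sends every element of `L₁ ∩ L₂` to itself; and it is injective into `L₂`.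
Hence `Ỹ ⊆ L₂` has `|L₁|` elements and `(L₂ ∖ Ỹ) ∪ L₁` is a disjoint union with `|L₂|` elements.
Both rows contain `s₂ - d ∈ L₁ ∩ L₂` and nothing smaller, and every finite set of integers
bounded below by `b` is the row based at `b` of a partition (a new largest entry prepends a
part), which gives the new bipartition.
-/

open Finset

section SymbolRow

variable {p : ℕ → ℕ} {base : ℤ} {L : ℕ}

lemma le_of_mem_symbolRow {z : ℤ} (hz : z ∈ symbolRow p base L) : base ≤ z := by
  obtain ⟨k, -, rfl⟩ := mem_image.mp hz
  omega

lemma card_symbolRow (hp : Antitone p) (base : ℤ) (L : ℕ) : (symbolRow p base L).card = L := by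
  have hmono : StrictMonoOn (fun k : ℕ => base + (k : ℤ) + (p (L - 1 - k) : ℤ)) (range L) := by
    intro k hk k' hk' hkk'
    simp only [coe_range, Set.mem_Iio] at hk hk'
    have : p (L - 1 - k) ≤ p (L - 1 - k') := hp (by omega)
    simp only
    omega
  rw [symbolRow, card_image_of_injOn hmono.injOn, card_range]

lemma base_mem_symbolRow {n : ℕ} (h : p n = 0) : base ∈ symbolRow p base (n + 1) :=
  mem_image.mpr ⟨0, by simp, by simp [h]⟩

lemma symbolRow_succ (p : ℕ → ℕ) (base : ℤ) (L : ℕ) :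
    symbolRow p base (L + 1) = insert (base + L + p 0) (symbolRow (fun i => p (i + 1)) base L) := by
  rw [symbolRow, range_add_one, image_insert, Nat.add_sub_cancel, Nat.sub_self, symbolRow]
  congr 1
  refine image_congr fun k hk => ?_
  simp only [coe_range, Set.mem_Iio] at hk
  simp only [show L - k = L - 1 - k + 1 by omega]

lemma exists_antitone_symbolRow_eq (base : ℤ) (S : Finset ℤ) (hS : ∀ z ∈ S, base ≤ z) :
    ∃ p : ℕ → ℕ, Antitone p ∧ (∀ i, S.card ≤ i → p i = 0) ∧ symbolRow p base S.card = S := by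
  induction S using Finset.induction_on_max with
  | empty => exact ⟨0, antitone_const, fun _ _ => rfl, by simp [symbolRow]⟩
  | insert a s has ih =>
    obtain ⟨p, hp, hp0, hps⟩ := ih fun z hz => hS z (mem_insert_of_mem hz)
    have hcard : (insert a s).card = s.card + 1 := card_insert_of_notMem fun h => (has a h).false
    have htop : base + s.card + p 0 ≤ a := by
      rcases h : s.card with _ | n
      · have := hS a (mem_insert_self a s)
        have := hp0 0 h.le
        omega
      · rw [h, symbolRow_succ] at hps
        have := has _ (hps ▸ mem_insert_self _ _)
        omega
    set c := (a - base - s.card).toNat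
    refine ⟨fun | 0 => c | i + 1 => p i, antitone_nat_of_succ_le ?_, ?_, ?_⟩
    · rintro (_ | n)
      · show p 0 ≤ c
        omega
      · exact hp (Nat.le_succ n)
    · rintro (_ | i) hi <;> rw [hcard] at hi
      · omega
      · exact hp0 i (by omega)
    · rw [hcard, symbolRow_succ]
      show insert (base + s.card + c) (symbolRow p base s.card) = insert a s
      rw [hps]
      congr 1
      omega

end SymbolRow

def matchPartner (Y : Finset ℤ) (x : ℤ) (hY : Y.Nonempty) : ℤ :=
  if h : (Y.filter (· ≤ x)).Nonempty then (Y.filter (· ≤ x)).max' h else Y.max' hY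

lemma matchPartner_mem {Y : Finset ℤ} (x : ℤ) (hY : Y.Nonempty) : matchPartner Y x hY ∈ Y := by
  unfold matchPartner
  split_ifs with h
  · exact (mem_filter.mp ((Y.filter (· ≤ x)).max'_mem h)).1
  · exact Y.max'_mem hY

lemma matchPartner_eq_self {Y : Finset ℤ} {x : ℤ} (hx : x ∈ Y) :
    matchPartner Y x ⟨x, hx⟩ = x := by
  have hxf : x ∈ Y.filter (· ≤ x) := mem_filter.mpr ⟨hx, le_rfl⟩
  unfold matchPartner
  rw [dif_pos ⟨x, hxf⟩]
  exact le_antisymm (mem_filter.mp (max'_mem (Y.filter (· ≤ x)) _)).2 (le_max' _ _ hxf)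

lemma matchSet_of_nonempty {X Y : Finset ℤ} (hX : X.Nonempty) (hY : Y.Nonempty) :
    matchSet X Y = insert (matchPartner Y (X.min' hX) hY)
      (matchSet (X.erase (X.min' hX)) (Y.erase (matchPartner Y (X.min' hX) hY))) := by
  rw [matchSet, dif_pos hX, dif_pos hY]
  rfl

lemma matchSet_eq_empty {X Y : Finset ℤ} (h : ¬(X.Nonempty ∧ Y.Nonempty)) :
    matchSet X Y = ∅ := by
  rw [matchSet]
  split_ifs with hX hY
  exacts [absurd ⟨hX, hY⟩ h, rfl, rfl]

lemma matchSet_subset (X Y : Finset ℤ) : matchSet X Y ⊆ Y := by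
  induction X, Y using matchSet.induct
  case case1 X Y hX hY x y ih =>
    have hXY : matchSet X Y = insert y (matchSet (X.erase x) (Y.erase y)) :=
      matchSet_of_nonempty hX hY
    rw [hXY]
    exact insert_subset (matchPartner_mem x hY) (ih.trans (erase_subset _ _))
  all_goals rw [matchSet_eq_empty (by tauto)]; exact empty_subset _

lemma card_matchSet (X Y : Finset ℤ) : (matchSet X Y).card = min X.card Y.card := by
  induction X, Y using matchSet.induct
  case case1 X Y hX hY x y ih =>
    have hXY : matchSet X Y = insert y (matchSet (X.erase x) (Y.erase y)) :=
      matchSet_of_nonempty hX hY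
    have hy : y ∉ matchSet (X.erase x) (Y.erase y) :=
      fun h => (mem_erase.mp (matchSet_subset _ _ h)).1 rfl
    have hyY : y ∈ Y := matchPartner_mem x hY
    rw [hXY, card_insert_of_notMem hy, ih, card_erase_of_mem (min'_mem X hX),
      card_erase_of_mem hyY]
    have := hX.card_pos
    have := hY.card_pos
    omega
  case case2 X Y _ hY => rw [matchSet_eq_empty (by tauto), not_nonempty_iff_eq_empty.mp hY]; simp
  case case3 X Y hX => rw [matchSet_eq_empty (by tauto), not_nonempty_iff_eq_empty.mp hX]; simp

lemma inter_subset_matchSet (X Y : Finset ℤ) : X ∩ Y ⊆ matchSet X Y := by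
  induction X, Y using matchSet.induct
  case case1 X Y hX hY x y ih =>
    have hXY : matchSet X Y = insert y (matchSet (X.erase x) (Y.erase y)) :=
      matchSet_of_nonempty hX hY
    intro z hz
    obtain ⟨hzX, hzY⟩ := mem_inter.mp hz
    rw [hXY]
    by_cases hzy : z = y
    · exact mem_insert.mpr (Or.inl hzy)
    have hzx : z ≠ x := by
      rintro rfl
      exact hzy (matchPartner_eq_self hzY).symm
    exact mem_insert_of_mem
      (ih (mem_inter.mpr ⟨mem_erase.mpr ⟨hzx, hzX⟩, mem_erase.mpr ⟨hzy, hzY⟩⟩))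
  case case2 X Y _ hY => simp [not_nonempty_iff_eq_empty.mp hY]
  case case3 X Y hX => simp [not_nonempty_iff_eq_empty.mp hX]

lemma disjoint_sdiff_matchSet (X Y : Finset ℤ) : Disjoint (Y \ matchSet X Y) X :=
  disjoint_left.mpr fun _ hz hzX =>
    (mem_sdiff.mp hz).2 (inter_subset_matchSet X Y (mem_inter.mpr ⟨hzX, (mem_sdiff.mp hz).1⟩))

theorem stmt10_general (s₂ : ℤ)
    (p q : ℕ → ℕ) (hp : Antitone p) (hq : Antitone q)
    (t : ℕ)
    (d : ℕ) (hd : t ≤ d) (hpd : p (d - t) = 0) (hqd : q (d - t) = 0) :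
    matchSet (symbolRow p (s₂ - d) (d + 1 - t)) (symbolRow q (s₂ - d) (d + 1)) ⊆
        symbolRow q (s₂ - d) (d + 1) ∧
    (matchSet (symbolRow p (s₂ - d) (d + 1 - t)) (symbolRow q (s₂ - d) (d + 1))).card =
        (symbolRow p (s₂ - d) (d + 1 - t)).card ∧
    Disjoint
      (symbolRow q (s₂ - d) (d + 1) \
        matchSet (symbolRow p (s₂ - d) (d + 1 - t)) (symbolRow q (s₂ - d) (d + 1)))
      (symbolRow p (s₂ - d) (d + 1 - t)) ∧
    (s₂ - d) ∈ matchSet (symbolRow p (s₂ - d) (d + 1 - t)) (symbolRow q (s₂ - d) (d + 1)) ∧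
    (∀ z ∈ matchSet (symbolRow p (s₂ - d) (d + 1 - t)) (symbolRow q (s₂ - d) (d + 1)),
      s₂ - d ≤ z) ∧
    (s₂ - d) ∈ ((symbolRow q (s₂ - d) (d + 1) \
        matchSet (symbolRow p (s₂ - d) (d + 1 - t)) (symbolRow q (s₂ - d) (d + 1))) ∪
      symbolRow p (s₂ - d) (d + 1 - t)) ∧
    (∀ z ∈ ((symbolRow q (s₂ - d) (d + 1) \
        matchSet (symbolRow p (s₂ - d) (d + 1 - t)) (symbolRow q (s₂ - d) (d + 1))) ∪
      symbolRow p (s₂ - d) (d + 1 - t)), s₂ - d ≤ z) ∧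
    (∃ p' q' : ℕ → ℕ, Antitone p' ∧ Antitone q' ∧
      symbolRow p' (s₂ - d) (d + 1 - t) =
        matchSet (symbolRow p (s₂ - d) (d + 1 - t)) (symbolRow q (s₂ - d) (d + 1)) ∧
      symbolRow q' (s₂ - d) (d + 1) =
        ((symbolRow q (s₂ - d) (d + 1)) \
            matchSet (symbolRow p (s₂ - d) (d + 1 - t)) (symbolRow q (s₂ - d) (d + 1))) ∪
          symbolRow p (s₂ - d) (d + 1 - t)) := by
  have hbX : s₂ - d ∈ symbolRow p (s₂ - d) (d + 1 - t) := by
    rw [show d + 1 - t = d - t + 1 by omega]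
    exact base_mem_symbolRow hpd
  have hbY : s₂ - d ∈ symbolRow q (s₂ - d) (d + 1) :=
    base_mem_symbolRow (Nat.eq_zero_of_le_zero (hqd ▸ hq (Nat.sub_le d t)))
  set X := symbolRow p (s₂ - d) (d + 1 - t)
  set Y := symbolRow q (s₂ - d) (d + 1)
  set M := matchSet X Y
  have hMY : M ⊆ Y := matchSet_subset X Y
  have hcardX : X.card = d + 1 - t := card_symbolRow hp _ _
  have hcardY : Y.card = d + 1 := card_symbolRow hq _ _
  have hcardM : M.card = d + 1 - t := by rw [card_matchSet, hcardX, hcardY]; omega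
  have hdisj : Disjoint (Y \ M) X := disjoint_sdiff_matchSet X Y
  have hcardU : (Y \ M ∪ X).card = d + 1 := by
    rw [card_union_of_disjoint hdisj, card_sdiff_of_subset hMY]; omega
  have hU : ∀ z ∈ Y \ M ∪ X, s₂ - d ≤ z := by
    simp only [mem_union, mem_sdiff]
    rintro z (⟨hz, -⟩ | hz) <;> exact le_of_mem_symbolRow hz
  have hM : ∀ z ∈ M, s₂ - d ≤ z := fun z hz => le_of_mem_symbolRow (hMY hz)
  obtain ⟨p', hp', -, hp'M⟩ := exists_antitone_symbolRow_eq _ M hM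
  obtain ⟨q', hq', -, hq'U⟩ := exists_antitone_symbolRow_eq _ _ hU
  rw [hcardM] at hp'M
  rw [hcardU] at hq'U
  exact ⟨hMY, hcardM.trans hcardX.symm, hdisj, inter_subset_matchSet X Y (mem_inter.mpr ⟨hbX, hbY⟩),
    hM, mem_union_right _ hbX, hU, p', q', hp', hq', hp'M, hq'U⟩

/-- for `s₁ ≤ s₂` and the symbol rows `L₁, L₂` of a bipartition, the matched
set `Ỹ = matchSet L₁ L₂` consists of `|L₁|` pairwise distinct elements of `L₂`, the union
`(L₂ ∖ Ỹ) ∪ L₁` has no repeated element, both new rows have smallest entry `s₂ − d`, and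
they form a valid symbol of some bipartition with charge `(s₁,s₂)`. -/
theorem stmt10 (s₁ s₂ : ℤ) (hs : s₁ ≤ s₂)
    (p q : ℕ → ℕ) (hp : Antitone p) (hq : Antitone q)
    (t : ℕ) (ht : (t : ℤ) = s₂ - s₁)
    (d : ℕ) (hd : t ≤ d) (hpd : p (d - t) = 0) (hqd : q (d - t) = 0) :
    matchSet (symbolRow p (s₂ - d) (d + 1 - t)) (symbolRow q (s₂ - d) (d + 1)) ⊆
        symbolRow q (s₂ - d) (d + 1) ∧
    (matchSet (symbolRow p (s₂ - d) (d + 1 - t)) (symbolRow q (s₂ - d) (d + 1))).card =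
        (symbolRow p (s₂ - d) (d + 1 - t)).card ∧
    Disjoint
      (symbolRow q (s₂ - d) (d + 1) \
        matchSet (symbolRow p (s₂ - d) (d + 1 - t)) (symbolRow q (s₂ - d) (d + 1)))
      (symbolRow p (s₂ - d) (d + 1 - t)) ∧
    (s₂ - d) ∈ matchSet (symbolRow p (s₂ - d) (d + 1 - t)) (symbolRow q (s₂ - d) (d + 1)) ∧
    (∀ z ∈ matchSet (symbolRow p (s₂ - d) (d + 1 - t)) (symbolRow q (s₂ - d) (d + 1)),
      s₂ - d ≤ z) ∧
    (s₂ - d) ∈ ((symbolRow q (s₂ - d) (d + 1) \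
        matchSet (symbolRow p (s₂ - d) (d + 1 - t)) (symbolRow q (s₂ - d) (d + 1))) ∪
      symbolRow p (s₂ - d) (d + 1 - t)) ∧
    (∀ z ∈ ((symbolRow q (s₂ - d) (d + 1) \
        matchSet (symbolRow p (s₂ - d) (d + 1 - t)) (symbolRow q (s₂ - d) (d + 1))) ∪
      symbolRow p (s₂ - d) (d + 1 - t)), s₂ - d ≤ z) ∧
    (∃ p' q' : ℕ → ℕ, Antitone p' ∧ Antitone q' ∧
      symbolRow p' (s₂ - d) (d + 1 - t) =
        matchSet (symbolRow p (s₂ - d) (d + 1 - t)) (symbolRow q (s₂ - d) (d + 1)) ∧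
      symbolRow q' (s₂ - d) (d + 1) =
        ((symbolRow q (s₂ - d) (d + 1)) \
            matchSet (symbolRow p (s₂ - d) (d + 1 - t)) (symbolRow q (s₂ - d) (d + 1))) ∪
          symbolRow p (s₂ - d) (d + 1 - t)) :=
  stmt10_general s₂ p q hp hq t d hd hpd hqd
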